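/- The bottleneck distance on the set of barcodes is non-degenerate: if two barcodes B and B' satisfy d_bottle(B, B') = 0, then B = B' as multisets of intervals. -/

import Mathlib

/-!
A `δ`-matching with `2δ` shorter than a bar `v` cannot delete copies of `v`, and sends each of
them to a bar whose endpoints are within `δ` of those of `v`. Such bars are long, hence finitely
many, so once `δ` is small enough the only one among them is `v` itself. Matchings with
arbitrarily small `δ` therefore embed the copies of `v` in `B` into those in `B'`, and
symmetrically; Schröder–Bernstein gives a bijection on each fibre, and these glue together.
-/

open scoped ENNReal

/-- A bar `(a, b]`, where the second component `⊤ : EReal` encodes a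
semi-infinite bar `(a, +∞)`. -/
abbrev Bar := ℝ × EReal

namespace Bar

/-- A bar is valid when it describes a non-empty interval. -/
def IsValid (I : Bar) : Prop := (I.1 : EReal) < I.2

/-- The length of a bar. -/
noncomputable def length (I : Bar) : EReal := I.2 - (I.1 : EReal)

/-- The interval `(a, b]` (or `(a, +∞)`) underlying a bar, as a subset of `ℝ`. -/
def toSet (I : Bar) : Set ℝ := {x | I.1 < x ∧ (x : EReal) ≤ I.2}

/-- The `δ`-thickening `I^{-δ}` of a bar: `(a, b]` becomes `(a - δ, b + δ]`
and `(a, +∞)` becomes `(a - δ, +∞)`. -/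
noncomputable def thicken (δ : ℝ) (I : Bar) : Bar := (I.1 - δ, I.2 + (δ : EReal))

/-- The shift of a bar by `c ∈ ℝ`. -/
noncomputable def shift (c : ℝ) (I : Bar) : Bar := (I.1 + c, I.2 + (c : EReal))

/-- A bar is semi-infinite when its right end point is `+∞`. -/
def IsInfinite (I : Bar) : Prop := I.2 = ⊤

lemma length_shift (c : ℝ) (I : Bar) : (I.shift c).length = I.length := by
  obtain ⟨a, b⟩ := I
  induction b using EReal.rec with
  | bot => simp [shift, length]
  | top => show (⊤ : EReal) - ((a + c : ℝ) : EReal) = ⊤ - (a : EReal); rw [EReal.top_sub_coe, EReal.top_sub_coe]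
  | coe b =>
      show ((b : EReal) + (c : EReal)) - ((a + c : ℝ) : EReal) = (b : EReal) - (a : EReal)
      norm_cast
      ring

lemma IsValid.shift {I : Bar} (h : I.IsValid) (c : ℝ) : (I.shift c).IsValid := by
  obtain ⟨a, b⟩ := I
  show ((a + c : ℝ) : EReal) < b + (c : EReal)
  push_cast
  exact EReal.add_lt_add_right_coe h c

end Bar

/-- A barcode: a multiset of valid bars (encoded by an indexed family), such
that for every `ε > 0` only finitely many bars have length at least `ε`. -/
structure Barcode where
  ι : Type
  bar : ι → Bar
  valid : ∀ i, (bar i).IsValid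
  finLong : ∀ ε : ℝ, 0 < ε → {i | (ε : EReal) ≤ (bar i).length}.Finite

namespace Barcode

/-- Equality of barcodes as multisets of bars: there is a bijection between the
index sets commuting with the bars. -/
def Equiv (B B' : Barcode) : Prop :=
  ∃ e : B.ι ≃ B'.ι, ∀ i, B'.bar (e i) = B.bar i

/-- A `δ`-matching between two barcodes: one deletes, in both barcodes, some
bars of length at most `2δ`, and finds a bijection `φ` between the remaining
bars such that `φ(I) = J` implies `I ⊆ J^{-δ}` and `J ⊆ I^{-δ}`. -/
structure Matching (δ : ℝ) (B B' : Barcode) where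
  del : Set B.ι
  del' : Set B'.ι
  del_short : ∀ i ∈ del, (B.bar i).length ≤ ((2 * δ : ℝ) : EReal)
  del'_short : ∀ j ∈ del', (B'.bar j).length ≤ ((2 * δ : ℝ) : EReal)
  φ : ↥(delᶜ) ≃ ↥(del'ᶜ)
  subset : ∀ i : ↥(delᶜ), (B.bar i).toSet ⊆ (Bar.thicken δ (B'.bar (φ i))).toSet
  subset' : ∀ i : ↥(delᶜ), (B'.bar (φ i)).toSet ⊆ (Bar.thicken δ (B.bar i)).toSet

/-- The bottleneck distance between two barcodes (`⊤` if no matching exists). -/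
noncomputable def dBottle (B B' : Barcode) : ℝ≥0∞ :=
  sInf (ENNReal.ofReal '' {δ : ℝ | 0 ≤ δ ∧ Nonempty (Matching δ B B')})

/-- The shift of a barcode by `c ∈ ℝ`, denoted `B[c]`. -/
noncomputable def shift (c : ℝ) (B : Barcode) : Barcode where
  ι := B.ι
  bar i := (B.bar i).shift c
  valid i := (B.valid i).shift c
  finLong ε hε := by simpa [Bar.length_shift] using B.finLong ε hε

/-- `σ^∞(B)`: the number of semi-infinite bars of `B`. -/
noncomputable def sigmaInf (B : Barcode) : ℕ :=
  Nat.card {i : B.ι // (B.bar i).IsInfinite}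

/-- The quotient pseudo-distance on the space `𝓑̂` of barcodes modulo overall
shift: `δ([B], [B']) = inf_c d_bottle(B, B'[c])`. -/
noncomputable def dHat (B B' : Barcode) : ℝ≥0∞ :=
  ⨅ c : ℝ, dBottle B (B'.shift c)

end Barcode

open Filter Topology

lemma EReal.le_of_forall_pos_le_add_coe {x y : EReal} (h : ∀ ε : ℝ, 0 < ε → x ≤ y + ε) :
    x ≤ y := by
  induction y using EReal.rec with
  | bot => simpa using h 1 one_pos
  | top => exact le_top
  | coe y =>
    rw [← EReal.le_of_forall_lt_iff_le]
    intro z hz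
    have hyz : y < z := by exact_mod_cast hz
    have := h (z - y) (by linarith)
    rwa [← EReal.coe_add, add_sub_cancel] at this

namespace Bar

lemma exists_pos_le_length {I : Bar} (hI : I.IsValid) :
    ∃ ℓ : ℝ, 0 < ℓ ∧ (ℓ : EReal) ≤ I.length := by
  obtain ⟨a, b⟩ := I
  induction b using EReal.rec with
  | bot => exact absurd hI not_lt_bot
  | top => exact ⟨1, one_pos, by simp [length]⟩
  | coe b =>
    have hab : a < b := EReal.coe_lt_coe_iff.1 hI
    exact ⟨b - a, sub_pos.2 hab, by simp [length, ← EReal.coe_sub]⟩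

lemma exists_mem_toSet_lt {I : Bar} (hI : I.IsValid) {c : ℝ} (hc : I.1 < c) :
    ∃ x ∈ I.toSet, x < c := by
  obtain ⟨a, b⟩ := I
  induction b using EReal.rec with
  | bot => exact absurd hI not_lt_bot
  | top => exact ⟨(a + c) / 2, ⟨by linarith, le_top⟩, by linarith⟩
  | coe b =>
    have hab : a < b := EReal.coe_lt_coe_iff.1 hI
    refine ⟨min ((a + c) / 2) b, ⟨lt_min (by linarith) hab, ?_⟩, ?_⟩
    · exact EReal.coe_le_coe_iff.2 (min_le_right _ _)
    · exact (min_le_left _ _).trans_lt (by linarith)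

lemma exists_mem_toSet_ge {I : Bar} (hI : I.IsValid) {z : ℝ} (hz : (z : EReal) < I.2) :
    ∃ x ∈ I.toSet, z ≤ x := by
  obtain ⟨x, hx, -⟩ := exists_mem_toSet_lt hI (lt_add_one I.1)
  refine ⟨max x z, ⟨hx.1.trans_le (le_max_left _ _), ?_⟩, le_max_right _ _⟩
  rcases max_choice x z with h | h <;> rw [h]
  exacts [hx.2, hz.le]

lemma le_of_toSet_subset_thicken {δ : ℝ} {I J : Bar} (hI : I.IsValid)
    (h : I.toSet ⊆ (J.thicken δ).toSet) : J.1 - δ ≤ I.1 ∧ I.2 ≤ J.2 + δ := by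
  constructor
  · by_contra! hlt
    obtain ⟨x, hx, hxlt⟩ := exists_mem_toSet_lt hI hlt
    exact (h hx).1.not_gt hxlt
  · rw [← EReal.ge_of_forall_gt_iff_ge]
    intro z hz
    obtain ⟨x, hx, hzx⟩ := exists_mem_toSet_ge hI hz
    exact (EReal.coe_le_coe_iff.2 hzx).trans (h hx).2

def Near (δ : ℝ) (I J : Bar) : Prop :=
  |I.1 - J.1| ≤ δ ∧ I.2 ≤ J.2 + δ ∧ J.2 ≤ I.2 + δ

lemma Near.mono {δ δ' : ℝ} {I J : Bar} (h : Near δ I J) (hδ : δ ≤ δ') : Near δ' I J := by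
  have hδ' : (δ : EReal) ≤ δ' := by exact_mod_cast hδ
  exact ⟨h.1.trans hδ, h.2.1.trans (add_le_add_right hδ' _), h.2.2.trans (add_le_add_right hδ' _)⟩

lemma near_of_toSet_subset {δ : ℝ} {I J : Bar} (hI : I.IsValid) (hJ : J.IsValid)
    (hIJ : I.toSet ⊆ (J.thicken δ).toSet) (hJI : J.toSet ⊆ (I.thicken δ).toSet) :
    Near δ I J := by
  obtain ⟨h₁, h₂⟩ := le_of_toSet_subset_thicken hI hIJ
  obtain ⟨h₃, h₄⟩ := le_of_toSet_subset_thicken hJ hJI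
  exact ⟨abs_sub_le_iff.2 ⟨by linarith, by linarith⟩, h₂, h₄⟩

lemma eq_of_forall_near {I J : Bar} (h : ∀ δ : ℝ, 0 < δ → Near δ I J) : I = J := by
  refine Prod.ext ?_ (le_antisymm ?_ ?_)
  · exact eq_of_abs_sub_nonpos (le_of_forall_pos_le_add fun δ hδ => by simpa using (h δ hδ).1)
  · exact EReal.le_of_forall_pos_le_add_coe fun δ hδ => (h δ hδ).2.1
  · exact EReal.le_of_forall_pos_le_add_coe fun δ hδ => (h δ hδ).2.2

lemma eventually_not_near {I J : Bar} (h : I ≠ J) : ∀ᶠ δ in 𝓝[≥] (0 : ℝ), ¬ Near δ I J := by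
  by_contra hfreq
  rw [not_eventually] at hfreq
  refine h (eq_of_forall_near fun δ hδ => ?_)
  obtain ⟨δ', hnear, hδ'⟩ := (hfreq.mono fun _ => not_not.1).and_eventually
    (Ico_mem_nhdsGE hδ) |>.exists
  exact hnear.mono hδ'.2.le

lemma Near.length_le {δ : ℝ} {I J : Bar} (h : Near δ I J) :
    I.length ≤ J.length + ((2 * δ : ℝ) : EReal) := by
  have h₁ : ((J.1 - δ : ℝ) : EReal) ≤ I.1 := by
    exact_mod_cast (sub_le_comm.1 (abs_sub_le_iff.1 h.1).2)
  calc I.length ≤ (J.2 + δ) - ((J.1 - δ : ℝ) : EReal) := EReal.sub_le_sub h.2.1 h₁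
    _ = J.length + ((2 * δ : ℝ) : EReal) := by
      obtain ⟨a, b⟩ := J
      induction b using EReal.rec with
      | bot => simp [length]
      | top =>
        dsimp only [length]
        rw [EReal.top_add_coe, EReal.top_sub_coe, EReal.top_sub_coe, EReal.top_add_coe]
      | coe b => simp only [length]; norm_cast; ring

end Bar

namespace Barcode

open Bar

def Matching.symm {δ : ℝ} {B B' : Barcode} (M : Matching δ B B') : Matching δ B' B where
  del := M.del'
  del' := M.del
  del_short := M.del'_short
  del'_short := M.del_short
  φ := M.φ.symm
  subset j := by simpa using M.subset' (M.φ.symm j)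
  subset' j := by simpa using M.subset (M.φ.symm j)

lemma dBottle_comm (B B' : Barcode) : dBottle B B' = dBottle B' B := by
  have key : ∀ δ, Nonempty (Matching δ B B') ↔ Nonempty (Matching δ B' B) :=
    fun δ => ⟨fun ⟨M⟩ => ⟨M.symm⟩, fun ⟨M⟩ => ⟨M.symm⟩⟩
  simp only [dBottle, key]

lemma frequently_nonempty_matching {B B' : Barcode} (h : dBottle B B' = 0) :
    ∃ᶠ δ in 𝓝[≥] (0 : ℝ), Nonempty (Matching δ B B') := by
  rw [frequently_iff]
  intro U hU
  obtain ⟨ε, hε, hεU⟩ := mem_nhdsGE_iff_exists_Ico_subset.1 hU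
  have hlt : dBottle B B' < ENNReal.ofReal ε := h ▸ ENNReal.ofReal_pos.2 hε
  obtain ⟨_, ⟨δ, ⟨hδ, hM⟩, rfl⟩, hδε⟩ := sInf_lt_iff.1 hlt
  exact ⟨δ, hεU ⟨hδ, (ENNReal.ofReal_lt_ofReal_iff_of_nonneg hδ).1 hδε⟩, hM⟩

lemma eventually_forall_near_imp_eq (B : Barcode) {v : Bar} (hv : v.IsValid) :
    ∀ᶠ δ in 𝓝[≥] (0 : ℝ), ∀ j, Near δ v (B.bar j) → B.bar j = v := by
  obtain ⟨ℓ, hℓ, hℓv⟩ := exists_pos_le_length hv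
  have hfin : {j | Near (ℓ / 4) v (B.bar j)}.Finite := by
    refine (B.finLong (ℓ / 2) (by positivity)).subset fun j hj => ?_
    have hlen := hℓv.trans hj.length_le
    rw [← EReal.sub_le_iff_le_add (.inl (EReal.coe_ne_bot _)) (.inl (EReal.coe_ne_top _)),
      ← EReal.coe_sub] at hlen
    exact le_trans (EReal.coe_le_coe_iff.2 (by linarith)) hlen
  have hfar : ∀ᶠ δ in 𝓝[≥] (0 : ℝ), ∀ j ∈ {j | Near (ℓ / 4) v (B.bar j)},
      B.bar j ≠ v → ¬ Near δ v (B.bar j) := by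
    refine (eventually_all_finite hfin).2 fun j _ => ?_
    by_cases hj : B.bar j = v
    · exact Eventually.of_forall fun _ hne => absurd hj hne
    · exact (eventually_not_near (Ne.symm hj)).mono fun _ hδ _ => hδ
  filter_upwards [hfar, Ico_mem_nhdsGE (by positivity : (0 : ℝ) < ℓ / 4)] with δ hδ hsmall j hj
  by_contra hne
  exact hδ j (hj.mono hsmall.2.le) hne hj

def Matching.fiberEmbedding {δ : ℝ} {B B' : Barcode} (M : Matching δ B B') {v : Bar}
    (hlong : ((2 * δ : ℝ) : EReal) < v.length)
    (hnear : ∀ j, Near δ v (B'.bar j) → B'.bar j = v) :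
    {i // B.bar i = v} ↪ {j // B'.bar j = v} :=
  have hkept (i : {i // B.bar i = v}) : i.1 ∈ M.delᶜ := fun hdel =>
    (M.del_short i hdel).not_gt (by rwa [i.2])
  { toFun i := ⟨M.φ ⟨i, hkept i⟩, hnear _ <| by
      have := near_of_toSet_subset (B.valid _) (B'.valid _) (M.subset ⟨i, hkept i⟩) (M.subset' _)
      rwa [i.2] at this⟩
    inj' i i' hii' := by
      have hφ := M.φ.injective (Subtype.ext (Subtype.mk.inj hii'))
      exact Subtype.ext (Subtype.mk.inj hφ) }

lemma nonempty_fiber_embedding {B B' : Barcode} (h : dBottle B B' = 0) (v : Bar) :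
    Nonempty ({i // B.bar i = v} ↪ {j // B'.bar j = v}) := by
  rcases isEmpty_or_nonempty {i // B.bar i = v} with _ | ⟨⟨i, rfl⟩⟩
  · exact ⟨Function.Embedding.ofIsEmpty⟩
  obtain ⟨ℓ, hℓ, hℓv⟩ := exists_pos_le_length (B.valid i)
  obtain ⟨δ, ⟨M⟩, hnear, hδ⟩ := (frequently_nonempty_matching h).and_eventually
    ((eventually_forall_near_imp_eq B' (B.valid i)).and (Ico_mem_nhdsGE (half_pos hℓ))) |>.exists
  have hlong : ((2 * δ : ℝ) : EReal) < (B.bar i).length :=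
    lt_of_lt_of_le (by exact_mod_cast (by linarith [hδ.2] : 2 * δ < ℓ)) hℓv
  exact ⟨M.fiberEmbedding hlong hnear⟩

end Barcode

/-- The bottleneck distance is non-degenerate: two barcodes at
bottleneck distance `0` are equal as multisets of intervals. -/
theorem bottleneck_nondegenerate (B B' : Barcode)
    (h : Barcode.dBottle B B' = 0) : Barcode.Equiv B B' := by
  have h' : Barcode.dBottle B' B = 0 := Barcode.dBottle_comm B B' ▸ h
  let e (v : Bar) : {i // B.bar i = v} ≃ {j // B'.bar j = v} :=
    (Function.Embedding.antisymm (Barcode.nonempty_fiber_embedding h v).some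
      (Barcode.nonempty_fiber_embedding h' v).some).some
  exact ⟨Equiv.ofFiberEquiv e, Equiv.ofFiberEquiv_map e⟩
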